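/- For α ∈ ℝ, β ∈ ℝ^d with α + |β|²/2 > 0 and λ ≥ 0 the nonnegative root of the cubic -λ³ + (α-2)λ² + (2α-1)λ + α + |β|²/2 = 0, the projected point (α - λ, β/(1+λ)) lies in the set A = {(a,b) : a + |b|²/2 ≤ 0}, with equality a + |b|²/2 = 0. -/
import Mathlib

theorem stmt_19 (d : ℕ) (hd : 1 ≤ d) (α : ℝ) (β : EuclideanSpace ℝ (Fin d))
    (h : α + ‖β‖ ^ 2 / 2 > 0) (lam : ℝ) (hlam : 0 ≤ lam)
    (hroot : -lam ^ 3 + (α - 2) * lam ^ 2 + (2 * α - 1) * lam + α + ‖β‖ ^ 2 / 2 = 0) :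
    (α - lam, (1 + lam)⁻¹ • β) ∈
      {p : ℝ × EuclideanSpace ℝ (Fin d) | p.1 + ‖p.2‖ ^ 2 / 2 ≤ 0} ∧
    (α - lam) + ‖(1 + lam)⁻¹ • β‖ ^ 2 / 2 = 0 := by
  have h1 : (0:ℝ) < 1 + lam := by linarith
  have hn : ‖(1 + lam)⁻¹ • β‖ ^ 2 = (1 + lam)⁻¹ ^ 2 * ‖β‖ ^ 2 := by
    rw [norm_smul, Real.norm_eq_abs, abs_of_pos (inv_pos.mpr h1), mul_pow]
  have key : (α - lam) + ‖(1 + lam)⁻¹ • β‖ ^ 2 / 2 = 0 := by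
    rw [hn]
    field_simp
    nlinarith [hroot]
  exact ⟨le_of_eq key, key⟩
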